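/- Let (M, d) be a compact metric space, f : M → M a homeomorphism, and Λ ⊆ M a nonempty compact set with f(Λ) = Λ. Suppose that the restriction f|_Λ is chain transitive (for every ε > 0 and every a, b ∈ Λ there is an ε-chain from a to b all of whose points lie in Λ), and that both the stable set W^s(Λ) = {x ∈ M : dist(f^n(x), Λ) → 0 as n → ∞} and the unstable set W^u(Λ) = {x ∈ M : dist(f^{−n}(x), Λ) → 0 as n → ∞} are dense in M. Then f is chain transitive on M: for every ε > 0 and every pair of points a, b ∈ M there is an ε-chain from a to b. -/

import Mathlib

open Filter Topology Function Metric

/-!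
Go from `a` to `b` in three stages. Jump from `f a` to a nearby point `x` of the stable set and
follow its orbit until it is `ε`-close to some `p ∈ Λ`. Chain inside `Λ` from `p` to a point `q`
that is close to a far backward iterate `f⁻ᵐ⁻¹ y` of a point `y` of the unstable set near `b`.
Uniform continuity of `f` (from compactness of `M`) makes `f q` close to `f⁻ᵐ y`, whose forward
orbit returns exactly to `y`, and a last jump reaches `b`.
-/

section EpsChain

variable {α : Type*} [PseudoMetricSpace α]

def EpsChain (f : α → α) (ε : ℝ) (a b : α) : Prop :=
  ∃ n ≥ 1, ∃ c : ℕ → α, c 0 = a ∧ c n = b ∧ ∀ i < n, dist (f (c i)) (c (i + 1)) < ε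

variable {f : α → α} {ε : ℝ} {a b c : α}

theorem EpsChain.of_dist_lt (h : dist (f a) b < ε) : EpsChain f ε a b :=
  ⟨1, le_rfl, fun i => if i = 0 then a else b, rfl, rfl, fun i hi => by
    obtain rfl : i = 0 := by omega
    simpa using h⟩

theorem EpsChain.trans (hab : EpsChain f ε a b) (hbc : EpsChain f ε b c) :
    EpsChain f ε a c := by
  obtain ⟨n, hn, p, hp0, hpn, hp⟩ := hab
  obtain ⟨m, hm, q, hq0, hqm, hq⟩ := hbc
  set r : ℕ → α := fun i => if i ≤ n then p i else q (i - n)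
  have hr_right : ∀ i, n ≤ i → r i = q (i - n) := by
    intro i hi
    rcases hi.eq_or_lt with rfl | hi
    · simp [r, hpn, hq0]
    · simp [r, hi.not_ge]
  refine ⟨n + m, by omega, r, by simp [r, hp0], by rw [hr_right _ (by omega)]; simpa, ?_⟩
  intro i hi
  by_cases hin : i < n
  · simpa [r, hin.le, Nat.succ_le_of_lt hin] using hp i hin
  · rw [hr_right i (by omega), hr_right (i + 1) (by omega), Nat.sub_add_comm (by omega)]
    exact hq (i - n) (by omega)

theorem EpsChain.of_dist_iterate_lt (hε : 0 < ε) {n : ℕ} (hn : 1 ≤ n) :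
    ∀ {a : α}, dist (f^[n] a) b < ε → EpsChain f ε a b := by
  induction n, hn using Nat.le_induction with
  | base => exact fun h => .of_dist_lt h
  | succ n _ ih =>
    intro a h
    exact (EpsChain.of_dist_lt (b := f a) (by simpa using hε)).trans
      (ih (by rwa [← iterate_succ_apply]))

theorem exists_mem_epsChain_of_dense_stableSet {Λ : Set α} (hΛ : Λ.Nonempty) (hε : 0 < ε)
    (hstable : Dense {x | Tendsto (fun n : ℕ => infDist (f^[n] x) Λ) atTop (𝓝 0)}) (a : α) :
    ∃ p ∈ Λ, EpsChain f ε a p := by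
  obtain ⟨x, hax, hx⟩ := Metric.dense_iff.mp hstable (f a) ε hε
  obtain ⟨n, hxn, hn⟩ := ((hx.eventually (gt_mem_nhds hε)).and (eventually_ge_atTop 1)).exists
  obtain ⟨p, hp, hxp⟩ := (infDist_lt_iff hΛ).mp hxn
  exact ⟨p, hp, (EpsChain.of_dist_lt (mem_ball'.mp hax)).trans (.of_dist_iterate_lt hε hn hxp)⟩

theorem exists_mem_epsChain_of_dense_unstableSet (f : α ≃ α) (hf : UniformContinuous f)
    {Λ : Set α} (hΛ : Λ.Nonempty) (hε : 0 < ε)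
    (hunstable : Dense {x | Tendsto (fun n : ℕ => infDist (f.symm^[n] x) Λ) atTop (𝓝 0)})
    (b : α) : ∃ q ∈ Λ, EpsChain f ε q b := by
  obtain ⟨δ, hδ, hfδ⟩ := Metric.uniformContinuous_iff.mp hf ε hε
  obtain ⟨y, hby, hy⟩ := Metric.dense_iff.mp hunstable b ε hε
  obtain ⟨m, hym, hm⟩ := (((hy.comp (tendsto_add_atTop_nat 1)).eventually (gt_mem_nhds hδ)).and
    (eventually_ge_atTop 1)).exists
  obtain ⟨q, hq, hyq⟩ := (infDist_lt_iff hΛ).mp hym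
  have hjump : dist (f q) (f.symm^[m] y) < ε := by
    have := hfδ (a := q) (b := f.symm^[m + 1] y) (by rw [dist_comm]; exact hyq)
    rwa [iterate_succ_apply', Equiv.apply_symm_apply] at this
  have horbit : dist (f^[m] (f.symm^[m] y)) b < ε := by
    rw [f.rightInverse_symm.iterate m y]
    exact mem_ball.mp hby
  exact ⟨q, hq, (EpsChain.of_dist_lt hjump).trans (.of_dist_iterate_lt hε hm horbit)⟩

end EpsChain

theorem stmt8_general {M : Type*} [MetricSpace M] [CompactSpace M]
    (f : M ≃ₜ M) (Λ : Set M) (hΛne : Λ.Nonempty)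
    (hchainΛ : ∀ ε > (0 : ℝ), ∀ a ∈ Λ, ∀ b ∈ Λ, ∃ n ≥ 1, ∃ c : ℕ → M,
      c 0 = a ∧ c n = b ∧ (∀ i ≤ n, c i ∈ Λ) ∧
      ∀ i < n, dist (f (c i)) (c (i + 1)) < ε)
    (hstable : Dense {x : M |
      Tendsto (fun n : ℕ => infDist ((f : M → M)^[n] x) Λ) atTop (𝓝 0)})
    (hunstable : Dense {x : M |
      Tendsto (fun n : ℕ => infDist ((f.symm : M → M)^[n] x) Λ) atTop (𝓝 0)}) :
    ∀ ε > (0 : ℝ), ∀ a b : M, ∃ n ≥ 1, ∃ c : ℕ → M,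
      c 0 = a ∧ c n = b ∧ ∀ i < n, dist (f (c i)) (c (i + 1)) < ε := by
  intro ε hε a b
  obtain ⟨p, hp, hap⟩ := exists_mem_epsChain_of_dense_stableSet hΛne hε hstable a
  obtain ⟨q, hq, hqb⟩ := exists_mem_epsChain_of_dense_unstableSet f.toEquiv
    (CompactSpace.uniformContinuous_of_continuous f.continuous) hΛne hε hunstable b
  obtain ⟨n, hn, c, hc0, hcn, -, hc⟩ := hchainΛ ε hε p hp q hq
  have hpq : EpsChain f ε p q := ⟨n, hn, c, hc0, hcn, hc⟩
  exact hap.trans (hpq.trans hqb)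

/-- Let `M` be a compact metric space, `f` a homeomorphism of `M`,
and `Λ ⊆ M` a nonempty compact invariant set (`f '' Λ = Λ`). If `f` restricted to
`Λ` is chain transitive (ε-chains inside `Λ`), and both the stable set
`{x : dist(f^n x, Λ) → 0}` and the unstable set `{x : dist(f^{-n} x, Λ) → 0}` are
dense in `M`, then `f` is chain transitive on `M`. -/
theorem stmt8 {M : Type*} [MetricSpace M] [CompactSpace M]
    (f : M ≃ₜ M) (Λ : Set M) (hΛne : Λ.Nonempty) (hΛcpt : IsCompact Λ)
    (hΛinv : f '' Λ = Λ)
    (hchainΛ : ∀ ε > (0 : ℝ), ∀ a ∈ Λ, ∀ b ∈ Λ, ∃ n ≥ 1, ∃ c : ℕ → M,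
      c 0 = a ∧ c n = b ∧ (∀ i ≤ n, c i ∈ Λ) ∧
      ∀ i < n, dist (f (c i)) (c (i + 1)) < ε)
    (hstable : Dense {x : M |
      Tendsto (fun n : ℕ => infDist ((f : M → M)^[n] x) Λ) atTop (𝓝 0)})
    (hunstable : Dense {x : M |
      Tendsto (fun n : ℕ => infDist ((f.symm : M → M)^[n] x) Λ) atTop (𝓝 0)}) :
    ∀ ε > (0 : ℝ), ∀ a b : M, ∃ n ≥ 1, ∃ c : ℕ → M,
      c 0 = a ∧ c n = b ∧ ∀ i < n, dist (f (c i)) (c (i + 1)) < ε :=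
  stmt8_general f Λ hΛne hchainΛ hstable hunstable
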